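/- arXiv:math/0603214 — 3 statements merged into one kernel-verified Lean document; each statement's English description precedes it below -/
import Mathlib

section
/- Nash inequality on a bounded interval: let ℓ < r be real numbers. There exists a constant C > 0, depending only on ℓ and r, such that for every continuously differentiable function f : [ℓ, r] → ℝ, (∫_ℓ^r f(x)² dx)² ≤ C·(∫_ℓ^r f(x)² dx + ∫_ℓ^r f'(x)² dx)·(∫_ℓ^r |f(x)| dx)². -/
open Set

/-- Nash inequality on a bounded interval: there is a constant `C > 0` depending only
on `ℓ` and `r` such that for every `C¹` function `f` on `[ℓ, r]`,
`‖f‖_{L²}⁴ ≤ C ‖f‖_{H¹}² ‖f‖_{L¹}²`. -/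
theorem nash_inequality_interval (ℓ r : ℝ) (hlr : ℓ < r) :
    ∃ C > (0:ℝ), ∀ f f' : ℝ → ℝ,
      (∀ x ∈ Icc ℓ r, HasDerivWithinAt f (f' x) (Icc ℓ r) x) →
      ContinuousOn f' (Icc ℓ r) →
      (∫ x in ℓ..r, f x ^ 2) ^ 2 ≤
        C * ((∫ x in ℓ..r, f x ^ 2) + ∫ x in ℓ..r, f' x ^ 2) *
          (∫ x in ℓ..r, |f x|) ^ 2 := by
  have hr : (0:ℝ) < r - ℓ := sub_pos.2 hlr
  have hle : ℓ ≤ r := hlr.le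
  refine ⟨(r - ℓ)⁻¹ + 1, by positivity, ?_⟩
  intro f f' hderiv hf'c
  set A : ℝ := ∫ x in ℓ..r, f x ^ 2 with hA
  set B : ℝ := ∫ x in ℓ..r, f' x ^ 2 with hB
  set L : ℝ := ∫ x in ℓ..r, |f x| with hL
  have huIcc : uIcc ℓ r = Icc ℓ r := uIcc_of_le hle
  have hfc : ContinuousOn f (Icc ℓ r) := fun x hx => (hderiv x hx).continuousWithinAt
  have hf2c : ContinuousOn (fun x => f x ^ 2) (Icc ℓ r) := hfc.pow 2
  have hsumc : ContinuousOn (fun x => f x ^ 2 + f' x ^ 2) (Icc ℓ r) :=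
    (hfc.pow 2).add (hf'c.pow 2)
  have hintf2 : IntervalIntegrable (fun x => f x ^ 2) MeasureTheory.volume ℓ r :=
    (huIcc ▸ hf2c).intervalIntegrable
  have hintsum : IntervalIntegrable (fun x => f x ^ 2 + f' x ^ 2) MeasureTheory.volume ℓ r :=
    (huIcc ▸ hsumc).intervalIntegrable
  have hA0 : 0 ≤ A := intervalIntegral.integral_nonneg hle (fun x _ => sq_nonneg _)
  have hB0 : 0 ≤ B := intervalIntegral.integral_nonneg hle (fun x _ => sq_nonneg _)
  have hL0 : 0 ≤ L := intervalIntegral.integral_nonneg hle (fun x _ => abs_nonneg _)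
  obtain ⟨x₀, hx₀, hmax⟩ :=
    isCompact_Icc.exists_isMaxOn (nonempty_Icc.2 hle) hf2c
  obtain ⟨y₀, hy₀, hmin⟩ :=
    isCompact_Icc.exists_isMinOn (nonempty_Icc.2 hle) hf2c
  -- key FTC estimate
  have key : ∀ a b : ℝ, a ∈ Icc ℓ r → b ∈ Icc ℓ r → a ≤ b →
      |f b ^ 2 - f a ^ 2| ≤ A + B := by
    intro a b ha hb hab
    have hgc : ContinuousOn (fun x => f x ^ 2) (Icc a b) :=
      hf2c.mono (Icc_subset_Icc ha.1 hb.2)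
    have hgd : ∀ x ∈ Ioo a b,
        HasDerivWithinAt (fun y => f y ^ 2) (2 * f x * f' x) (Ioi x) x := by
      intro x hx
      have hx' : x ∈ Ioo ℓ r := ⟨lt_of_le_of_lt ha.1 hx.1, lt_of_lt_of_le hx.2 hb.2⟩
      have hd : HasDerivAt f (f' x) x :=
        (hderiv x (Ioo_subset_Icc_self hx')).hasDerivAt (Icc_mem_nhds hx'.1 hx'.2)
      have : HasDerivAt (fun y => f y ^ 2) ((2:ℕ) * f x ^ 1 * f' x) x := hd.pow 2
      simpa [pow_one, mul_comm, mul_assoc] using this.hasDerivWithinAt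
    have hgint : IntervalIntegrable (fun x => 2 * f x * f' x) MeasureTheory.volume a b := by
      have : ContinuousOn (fun x => 2 * f x * f' x) (Icc ℓ r) :=
        (continuousOn_const.mul hfc).mul hf'c
      exact ((this.mono (Icc_subset_Icc ha.1 hb.2)).mono
        (by rw [uIcc_of_le hab])).intervalIntegrable
    have hftc : ∫ x in a..b, 2 * f x * f' x = f b ^ 2 - f a ^ 2 :=
      intervalIntegral.integral_eq_sub_of_hasDeriv_right_of_le hab hgc hgd hgint
    have habs : |∫ x in a..b, 2 * f x * f' x| ≤ ∫ x in a..b, |2 * f x * f' x| :=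
      intervalIntegral.abs_integral_le_integral_abs hab
    have hintabs : IntervalIntegrable (fun x => |2 * f x * f' x|) MeasureTheory.volume a b :=
      hgint.abs
    have h1 : (∫ x in a..b, |2 * f x * f' x|) ≤ ∫ x in a..b, f x ^ 2 + f' x ^ 2 := by
      apply intervalIntegral.integral_mono_on hab hintabs
        (hintsum.mono_set (by rw [uIcc_of_le hab, huIcc]; exact Icc_subset_Icc ha.1 hb.2))
      intro x _
      have := sq_nonneg (f x - f' x)
      have := sq_nonneg (f x + f' x)
      rw [abs_le]
      constructor <;> nlinarith
    have h2 : (∫ x in a..b, f x ^ 2 + f' x ^ 2) ≤ A + B := by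
      have : (∫ x in ℓ..r, f x ^ 2 + f' x ^ 2) = A + B :=
        intervalIntegral.integral_add hintf2
          ((huIcc ▸ (hf'c.pow 2)).intervalIntegrable)
      rw [← this]
      exact intervalIntegral.integral_mono_interval ha.1 hab hb.2
        (MeasureTheory.ae_of_all _ fun x => by positivity) hintsum
    calc |f b ^ 2 - f a ^ 2| = |∫ x in a..b, 2 * f x * f' x| := by rw [hftc]
      _ ≤ ∫ x in a..b, |2 * f x * f' x| := habs
      _ ≤ ∫ x in a..b, f x ^ 2 + f' x ^ 2 := h1
      _ ≤ A + B := h2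
  -- f x₀ ^ 2 ≤ f y₀ ^ 2 + (A + B)
  have hdiff : f x₀ ^ 2 - f y₀ ^ 2 ≤ A + B := by
    rcases le_total x₀ y₀ with h | h
    · have := key x₀ y₀ hx₀ hy₀ h
      have := abs_le.1 this
      linarith [this.1]
    · have := key y₀ x₀ hy₀ hx₀ h
      have := abs_le.1 this
      linarith [this.2]
  -- (r - ℓ) * f y₀ ^ 2 ≤ A
  have hmin' : (r - ℓ) * f y₀ ^ 2 ≤ A := by
    have : (∫ _x in ℓ..r, f y₀ ^ 2) ≤ A := by
      apply intervalIntegral.integral_mono_on hle intervalIntegrable_const hintf2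
      intro x hx
      exact hmin hx
    simpa [smul_eq_mul] using this
  -- A ≤ |f x₀| * L
  have hAL : A ≤ |f x₀| * L := by
    have hmono : (∫ x in ℓ..r, f x ^ 2) ≤ ∫ x in ℓ..r, |f x₀| * |f x| := by
      apply intervalIntegral.integral_mono_on hle hintf2
      · have : ContinuousOn (fun x => |f x₀| * |f x|) (Icc ℓ r) :=
          continuousOn_const.mul hfc.abs
        exact (huIcc ▸ this).intervalIntegrable
      · intro x hx
        have h1 : f x ^ 2 ≤ f x₀ ^ 2 := hmax hx
        have h2 : |f x| ≤ |f x₀| :=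
          (pow_le_pow_iff_left₀ (abs_nonneg (f x)) (abs_nonneg (f x₀)) two_ne_zero).mp
            (by simpa [sq_abs] using h1)
        calc f x ^ 2 = |f x| * |f x| := by rw [← sq_abs, sq]
          _ ≤ |f x₀| * |f x| := mul_le_mul_of_nonneg_right h2 (abs_nonneg _)
    calc A ≤ ∫ x in ℓ..r, |f x₀| * |f x| := hmono
      _ = |f x₀| * L := intervalIntegral.integral_const_mul _ _
  -- combine
  have hM : f x₀ ^ 2 ≤ ((r - ℓ)⁻¹ + 1) * (A + B) := by
    have h1 : f y₀ ^ 2 ≤ (r - ℓ)⁻¹ * A := by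
      rw [inv_mul_eq_div, le_div_iff₀ hr]
      linarith [hmin']
    have : (r - ℓ)⁻¹ * B ≥ 0 := by positivity
    nlinarith
  have hsq : A ^ 2 ≤ f x₀ ^ 2 * L ^ 2 := by
    calc A ^ 2 ≤ (|f x₀| * L) ^ 2 := by
          apply pow_le_pow_left₀ hA0 hAL
      _ = f x₀ ^ 2 * L ^ 2 := by rw [mul_pow, sq_abs]
  calc A ^ 2 ≤ f x₀ ^ 2 * L ^ 2 := hsq
    _ ≤ (((r - ℓ)⁻¹ + 1) * (A + B)) * L ^ 2 :=
        mul_le_mul_of_nonneg_right hM (sq_nonneg L)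
    _ = ((r - ℓ)⁻¹ + 1) * (A + B) * L ^ 2 := by ring
end

section
/- Stability of the Dirichlet problem under perturbation of the coefficients (elliptic error estimate): let λ, Λ > 0 and ℓ < r be real numbers, and let u_ℓ, u_r ∈ ℝ. For measurable functions a, ρ, b on [ℓ, r] with λ ≤ a(x) ≤ Λ, λ ≤ ρ(x) ≤ Λ, |b(x)| ≤ Λ for all x, define h(x) = 2·∫_ℓ^x b(y)/(ρ(y)a(y)) dy, S(x) = ∫_ℓ^x e^{−h(y)}/a(y) dy, and u(x) = u_ℓ + (u_r − u_ℓ)·S(x)/S(r) (the solution of the Dirichlet problem Lu = 0 on (ℓ,r), u(ℓ) = u_ℓ, u(r) = u_r, for the operator with characteristic (a,ρ,b)). Let aⁿ, ρⁿ, bⁿ satisfy the same bounds and define uⁿ analogously. Then there exists a constant C depending only on λ, Λ, ℓ, r such that sup_{x∈[ℓ,r]} |u(x) − uⁿ(x)| ≤ C·|u_r − u_ℓ|·sup_{x∈[ℓ,r]} ( |aⁿ(x) − a(x)| + |ρⁿ(x) − ρ(x)| + |bⁿ(x) − b(x)| ). -/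
/-!
Writing `u - uⁿ = (u_r - u_ℓ) (S(x)/S(r) - Sⁿ(x)/Sⁿ(r))`, everything reduces to Lipschitz bounds
on bounded ranges. The coefficient bounds give `|h| ≤ H := 2Λ(r - ℓ)/λ²`, so the scale density
`e^{-h}/a` lies between `e^{-H}/Λ` and `e^{H}/λ`: hence `|S| ≤ e^{H}(r - ℓ)/λ` and
`S(r) ≥ e^{-H}(r - ℓ)/Λ > 0`. Since `(a, ρ, b) ↦ b/(ρa)`, `h ↦ e^{-h}` and `(p, q) ↦ p/q` (with `q`
bounded below) are Lipschitz there, `|h - hⁿ|`, then `|S - Sⁿ|`, then `|S(x)/S(r) - Sⁿ(x)/Sⁿ(r)|`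
are bounded by `ε` times constants depending only on `λ, Λ, r - ℓ`.
-/

open Set

/-- `h(x) = 2 ∫_ℓ^x b/(ρ a)`. -/
noncomputable def hFun (ℓ : ℝ) (a ρ b : ℝ → ℝ) (x : ℝ) : ℝ :=
  2 * ∫ y in ℓ..x, b y / (ρ y * a y)

/-- The scale function `S(x) = ∫_ℓ^x e^{-h(y)}/a(y) dy`. -/
noncomputable def SFun (ℓ : ℝ) (a ρ b : ℝ → ℝ) (x : ℝ) : ℝ :=
  ∫ y in ℓ..x, Real.exp (-hFun ℓ a ρ b y) / a y

/-- The solution `u(x) = u_ℓ + (u_r - u_ℓ) S(x)/S(r)` of the Dirichlet problem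
`Lu = 0` on `(ℓ,r)`, `u(ℓ) = u_ℓ`, `u(r) = u_r`. -/
noncomputable def uSol (ℓ r uℓ ur : ℝ) (a ρ b : ℝ → ℝ) (x : ℝ) : ℝ :=
  uℓ + (ur - uℓ) * SFun ℓ a ρ b x / SFun ℓ a ρ b r

open MeasureTheory

lemma abs_div_sub_div_le {x y p q m M : ℝ} (hm : 0 < m) (hp : m ≤ p) (hq : m ≤ q)
    (hy : |y| ≤ M) : |x / p - y / q| ≤ |x - y| / m + M * |p - q| / m ^ 2 := by
  have hp0 : 0 < p := hm.trans_le hp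
  have hq0 : 0 < q := hm.trans_le hq
  have hM : 0 ≤ M := (abs_nonneg y).trans hy
  calc |x / p - y / q| = |(x - y) / p + y * (q - p) / (p * q)| := by
        congr 1; field_simp; ring
    _ ≤ |x - y| / p + |y| * |p - q| / (p * q) := by
        grw [abs_add_le]
        rw [abs_div, abs_div, abs_mul, abs_of_pos hp0, abs_of_pos (mul_pos hp0 hq0), abs_sub_comm q]
    _ ≤ |x - y| / m + M * |p - q| / m ^ 2 := by
        gcongr
        nlinarith

lemma abs_exp_sub_exp_le {u v H : ℝ} (hu : |u| ≤ H) (hv : |v| ≤ H) :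
    |Real.exp u - Real.exp v| ≤ Real.exp H * |u - v| := by
  wlog huv : v ≤ u generalizing u v
  · rw [abs_sub_comm, abs_sub_comm u v]
    exact this hv hu (le_of_not_ge huv)
  have key : Real.exp u * (1 - (u - v)) ≤ Real.exp v := by
    have := mul_le_mul_of_nonneg_left (Real.one_sub_le_exp_neg (u - v)) (Real.exp_pos u).le
    rwa [← Real.exp_add, show u + -(u - v) = v by ring] at this
  rw [abs_of_nonneg (sub_nonneg.2 (Real.exp_le_exp.2 huv)), abs_of_nonneg (sub_nonneg.2 huv)]
  calc Real.exp u - Real.exp v ≤ Real.exp u * (u - v) := by linarith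
    _ ≤ Real.exp H * (u - v) := by
        gcongr
        exact le_of_abs_le hu

lemma intervalIntegrable_of_abs_le {f : ℝ → ℝ} {ℓ r M x : ℝ}
    (hf : AEStronglyMeasurable f (volume.restrict (Icc ℓ r)))
    (hM : ∀ y ∈ Icc ℓ r, |f y| ≤ M) (hx : x ∈ Icc ℓ r) :
    IntervalIntegrable f volume ℓ x := by
  have : IntegrableOn f (Icc ℓ r) :=
    .of_bound measure_Icc_lt_top hf M ((ae_restrict_iff' measurableSet_Icc).2 (.of_forall hM))
  exact (intervalIntegrable_iff_integrableOn_Ioc_of_le hx.1).2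
    (this.mono_set (Ioc_subset_Icc_self.trans (Icc_subset_Icc_right hx.2)))

lemma abs_intervalIntegral_le {f : ℝ → ℝ} {ℓ r M x : ℝ} (hM : ∀ y ∈ Icc ℓ r, |f y| ≤ M)
    (hx : x ∈ Icc ℓ r) : |∫ y in ℓ..x, f y| ≤ M * (r - ℓ) := by
  have hM0 : 0 ≤ M := (abs_nonneg _).trans (hM ℓ ⟨le_rfl, hx.1.trans hx.2⟩)
  calc |∫ y in ℓ..x, f y| = ‖∫ y in ℓ..x, f y‖ := (Real.norm_eq_abs _).symm
    _ ≤ M * |x - ℓ| :=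
        intervalIntegral.norm_integral_le_of_norm_le_const fun y hy ↦ (Real.norm_eq_abs _).trans_le
          (hM y (by rw [uIoc_of_le hx.1] at hy; exact ⟨hy.1.le, hy.2.trans hx.2⟩))
    _ ≤ M * (r - ℓ) := by
        rw [abs_of_nonneg (sub_nonneg.2 hx.1)]
        gcongr
        exact hx.2

lemma abs_div_mul_sub_div_mul_le {a ρ b a' ρ' b' lam Lam : ℝ} (hlam : 0 < lam)
    (ha : lam ≤ a) (hρ : ρ ∈ Icc lam Lam) (ha' : a' ∈ Icc lam Lam) (hρ' : lam ≤ ρ')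
    (hb' : |b'| ≤ Lam) :
    |b / (ρ * a) - b' / (ρ' * a')| ≤
      (1 + (Lam / lam) ^ 2) / lam ^ 2 * (|a' - a| + |ρ' - ρ| + |b' - b|) := by
  have hLam : 0 ≤ Lam := (abs_nonneg b').trans hb'
  have hprod : |ρ * a - ρ' * a'| ≤ Lam * (|a' - a| + |ρ' - ρ|) := by
    calc |ρ * a - ρ' * a'| = |ρ * (a - a') + a' * (ρ - ρ')| := by ring_nf
      _ ≤ ρ * |a' - a| + a' * |ρ' - ρ| := by
          grw [abs_add_le, abs_mul, abs_mul, abs_of_pos (hlam.trans_le hρ.1),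
            abs_of_pos (hlam.trans_le ha'.1), abs_sub_comm a, abs_sub_comm ρ]
      _ ≤ Lam * (|a' - a| + |ρ' - ρ|) := by
          rw [mul_add]
          gcongr
          exacts [hρ.2, ha'.2]
  calc |b / (ρ * a) - b' / (ρ' * a')|
      ≤ |b - b'| / lam ^ 2 + Lam * |ρ * a - ρ' * a'| / (lam ^ 2) ^ 2 :=
        abs_div_sub_div_le (by positivity) (by nlinarith [hρ.1]) (by nlinarith [ha'.1]) hb'
    _ ≤ |b' - b| / lam ^ 2 + Lam * (Lam * (|a' - a| + |ρ' - ρ|)) / (lam ^ 2) ^ 2 := by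
        rw [abs_sub_comm b]; gcongr
    _ ≤ (1 + (Lam / lam) ^ 2) / lam ^ 2 * (|a' - a| + |ρ' - ρ| + |b' - b|) := by
        have := abs_nonneg (a' - a); have := abs_nonneg (ρ' - ρ); have := abs_nonneg (b' - b)
        rw [div_pow, add_div, mul_add]
        field_simp
        nlinarith

structure IsBoundedCharacteristic (lam Lam ℓ r : ℝ) (a ρ b : ℝ → ℝ) : Prop where
  measurable_a : Measurable a
  measurable_ρ : Measurable ρ
  measurable_b : Measurable b
  a_mem : ∀ x ∈ Icc ℓ r, a x ∈ Icc lam Lam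
  ρ_mem : ∀ x ∈ Icc ℓ r, ρ x ∈ Icc lam Lam
  abs_b_le : ∀ x ∈ Icc ℓ r, |b x| ≤ Lam

namespace IsBoundedCharacteristic

variable {lam Lam ℓ r x ε : ℝ} {a ρ b an ρn bn : ℝ → ℝ}

lemma abs_drift_le (hc : IsBoundedCharacteristic lam Lam ℓ r a ρ b) (hlam : 0 < lam)
    {y : ℝ} (hy : y ∈ Icc ℓ r) : |b y / (ρ y * a y)| ≤ Lam / lam ^ 2 := by
  have ha := hc.a_mem y hy
  have hρ := hc.ρ_mem y hy
  have hlam2 : lam ^ 2 ≤ ρ y * a y := by nlinarith [ha.1, hρ.1]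
  rw [abs_div, abs_of_pos ((pow_pos hlam 2).trans_le hlam2)]
  exact div_le_div₀ ((abs_nonneg _).trans (hc.abs_b_le y hy)) (hc.abs_b_le y hy) (by positivity)
    hlam2

lemma intervalIntegrable_drift (hc : IsBoundedCharacteristic lam Lam ℓ r a ρ b) (hlam : 0 < lam)
    (hx : x ∈ Icc ℓ r) : IntervalIntegrable (fun y ↦ b y / (ρ y * a y)) volume ℓ x :=
  intervalIntegrable_of_abs_le
    (hc.measurable_b.div (hc.measurable_ρ.mul hc.measurable_a)).aestronglyMeasurable
    (fun _ ↦ hc.abs_drift_le hlam) hx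

lemma abs_hFun_le (hc : IsBoundedCharacteristic lam Lam ℓ r a ρ b) (hlam : 0 < lam)
    (hx : x ∈ Icc ℓ r) : |hFun ℓ a ρ b x| ≤ 2 * (Lam / lam ^ 2) * (r - ℓ) := by
  rw [hFun, abs_mul, abs_two, mul_assoc]
  gcongr
  exact abs_intervalIntegral_le (fun _ ↦ hc.abs_drift_le hlam) hx

lemma continuousOn_hFun (hc : IsBoundedCharacteristic lam Lam ℓ r a ρ b) (hlam : 0 < lam)
    (hlr : ℓ ≤ r) : ContinuousOn (hFun ℓ a ρ b) (Icc ℓ r) :=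
  ((intervalIntegral.continuousOn_primitive_interval'
    (hc.intervalIntegrable_drift hlam (right_mem_Icc.2 hlr)) left_mem_uIcc).const_smul
      (2 : ℝ)).mono Icc_subset_uIcc

lemma abs_scaleDensity_le (hc : IsBoundedCharacteristic lam Lam ℓ r a ρ b) (hlam : 0 < lam)
    {y : ℝ} (hy : y ∈ Icc ℓ r) :
    |Real.exp (-hFun ℓ a ρ b y) / a y| ≤ Real.exp (2 * (Lam / lam ^ 2) * (r - ℓ)) / lam := by
  have ha := hc.a_mem y hy
  rw [abs_div, abs_of_pos (Real.exp_pos _), abs_of_pos (hlam.trans_le ha.1)]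
  gcongr
  · exact neg_le.1 (neg_le_of_abs_le (hc.abs_hFun_le hlam hy))
  · exact ha.1

lemma le_scaleDensity (hc : IsBoundedCharacteristic lam Lam ℓ r a ρ b) (hlam : 0 < lam)
    {y : ℝ} (hy : y ∈ Icc ℓ r) :
    Real.exp (-(2 * (Lam / lam ^ 2) * (r - ℓ))) / Lam ≤ Real.exp (-hFun ℓ a ρ b y) / a y := by
  have ha := hc.a_mem y hy
  gcongr
  · exact hlam.trans_le ha.1
  · exact le_of_abs_le (hc.abs_hFun_le hlam hy)
  · exact ha.2

lemma intervalIntegrable_scaleDensity (hc : IsBoundedCharacteristic lam Lam ℓ r a ρ b)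
    (hlam : 0 < lam) (hx : x ∈ Icc ℓ r) :
    IntervalIntegrable (fun y ↦ Real.exp (-hFun ℓ a ρ b y) / a y) volume ℓ x := by
  have hexp : ContinuousOn (fun y ↦ Real.exp (-hFun ℓ a ρ b y)) (Icc ℓ r) :=
    (hc.continuousOn_hFun hlam (hx.1.trans hx.2)).neg.rexp
  exact intervalIntegrable_of_abs_le
    ((hexp.aemeasurable measurableSet_Icc).div hc.measurable_a.aemeasurable).aestronglyMeasurable
    (fun _ ↦ hc.abs_scaleDensity_le hlam) hx

lemma abs_SFun_le (hc : IsBoundedCharacteristic lam Lam ℓ r a ρ b) (hlam : 0 < lam)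
    (hx : x ∈ Icc ℓ r) :
    |SFun ℓ a ρ b x| ≤ Real.exp (2 * (Lam / lam ^ 2) * (r - ℓ)) / lam * (r - ℓ) :=
  abs_intervalIntegral_le (fun _ ↦ hc.abs_scaleDensity_le hlam) hx

lemma le_SFun_right (hc : IsBoundedCharacteristic lam Lam ℓ r a ρ b) (hlam : 0 < lam)
    (hlr : ℓ ≤ r) :
    Real.exp (-(2 * (Lam / lam ^ 2) * (r - ℓ))) / Lam * (r - ℓ) ≤ SFun ℓ a ρ b r := by
  have := intervalIntegral.integral_mono_on hlr intervalIntegrable_const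
    (hc.intervalIntegrable_scaleDensity hlam (right_mem_Icc.2 hlr))
    (fun _ ↦ hc.le_scaleDensity hlam)
  rwa [intervalIntegral.integral_const, smul_eq_mul, mul_comm] at this

lemma abs_hFun_sub_le (hc : IsBoundedCharacteristic lam Lam ℓ r a ρ b)
    (hcn : IsBoundedCharacteristic lam Lam ℓ r an ρn bn) (hlam : 0 < lam)
    (hε : ∀ y ∈ Icc ℓ r, |an y - a y| + |ρn y - ρ y| + |bn y - b y| ≤ ε) (hx : x ∈ Icc ℓ r) :
    |hFun ℓ a ρ b x - hFun ℓ an ρn bn x| ≤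
      2 * ((1 + (Lam / lam) ^ 2) / lam ^ 2 * ε) * (r - ℓ) := by
  rw [hFun, hFun, ← mul_sub, ← intervalIntegral.integral_sub (hc.intervalIntegrable_drift hlam hx)
    (hcn.intervalIntegrable_drift hlam hx), abs_mul, abs_two, mul_assoc]
  gcongr
  refine abs_intervalIntegral_le (fun y hy ↦ ?_) hx
  grw [abs_div_mul_sub_div_mul_le hlam (hc.a_mem y hy).1 (hc.ρ_mem y hy) (hcn.a_mem y hy)
    (hcn.ρ_mem y hy).1 (hcn.abs_b_le y hy), hε y hy]

lemma abs_scaleDensity_sub_le (hc : IsBoundedCharacteristic lam Lam ℓ r a ρ b)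
    (hcn : IsBoundedCharacteristic lam Lam ℓ r an ρn bn) (hlam : 0 < lam)
    (hε : ∀ y ∈ Icc ℓ r, |an y - a y| + |ρn y - ρ y| + |bn y - b y| ≤ ε) (hx : x ∈ Icc ℓ r) :
    |Real.exp (-hFun ℓ a ρ b x) / a x - Real.exp (-hFun ℓ an ρn bn x) / an x| ≤
      (Real.exp (2 * (Lam / lam ^ 2) * (r - ℓ)) * (2 * ((1 + (Lam / lam) ^ 2) / lam ^ 2) * (r - ℓ))
        / lam + Real.exp (2 * (Lam / lam ^ 2) * (r - ℓ)) / lam ^ 2) * ε := by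
  have hexp := abs_exp_sub_exp_le (abs_neg (hFun ℓ a ρ b x) ▸ hc.abs_hFun_le hlam hx)
    (abs_neg (hFun ℓ an ρn bn x) ▸ hcn.abs_hFun_le hlam hx)
  rw [neg_sub_neg, abs_sub_comm (hFun ℓ an ρn bn x)] at hexp
  have hda : |a x - an x| ≤ ε := by
    have := hε x hx
    rw [abs_sub_comm]
    linarith [abs_nonneg (ρn x - ρ x), abs_nonneg (bn x - b x)]
  calc _ ≤ |Real.exp (-hFun ℓ a ρ b x) - Real.exp (-hFun ℓ an ρn bn x)| / lam
        + Real.exp (2 * (Lam / lam ^ 2) * (r - ℓ)) * |a x - an x| / lam ^ 2 :=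
        abs_div_sub_div_le hlam (hc.a_mem x hx).1 (hcn.a_mem x hx).1
          ((abs_of_pos (Real.exp_pos _)).trans_le
            (Real.exp_le_exp.2 (neg_le.1 (neg_le_of_abs_le (hcn.abs_hFun_le hlam hx)))))
    _ ≤ _ := by
        grw [hexp, hc.abs_hFun_sub_le hcn hlam hε hx, hda]
        exact le_of_eq (by ring)

lemma abs_SFun_sub_le (hc : IsBoundedCharacteristic lam Lam ℓ r a ρ b)
    (hcn : IsBoundedCharacteristic lam Lam ℓ r an ρn bn) (hlam : 0 < lam)
    (hε : ∀ y ∈ Icc ℓ r, |an y - a y| + |ρn y - ρ y| + |bn y - b y| ≤ ε) (hx : x ∈ Icc ℓ r) :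
    |SFun ℓ a ρ b x - SFun ℓ an ρn bn x| ≤
      (Real.exp (2 * (Lam / lam ^ 2) * (r - ℓ)) * (2 * ((1 + (Lam / lam) ^ 2) / lam ^ 2) * (r - ℓ))
        / lam + Real.exp (2 * (Lam / lam ^ 2) * (r - ℓ)) / lam ^ 2) * ε * (r - ℓ) := by
  rw [SFun, SFun, ← intervalIntegral.integral_sub (hc.intervalIntegrable_scaleDensity hlam hx)
    (hcn.intervalIntegrable_scaleDensity hlam hx)]
  exact abs_intervalIntegral_le (fun _ ↦ hc.abs_scaleDensity_sub_le hcn hlam hε) hx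

end IsBoundedCharacteristic

/-- Stability of the one-dimensional Dirichlet problem under uniform perturbation
of the coefficients: `sup |u - uⁿ| ≤ C |u_r - u_ℓ| sup(|aⁿ-a| + |ρⁿ-ρ| + |bⁿ-b|)`
with `C` depending only on `λ, Λ, ℓ, r`. -/
theorem elliptic_stability
    (lam Lam ℓ r : ℝ) (hlam : 0 < lam) (hLam : 0 < Lam) (hlr : ℓ < r) :
    ∃ C > (0:ℝ), ∀ uℓ ur : ℝ, ∀ a ρ b an ρn bn : ℝ → ℝ,
      Measurable a → Measurable ρ → Measurable b →
      Measurable an → Measurable ρn → Measurable bn →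
      (∀ x ∈ Icc ℓ r, a x ∈ Icc lam Lam) →
      (∀ x ∈ Icc ℓ r, ρ x ∈ Icc lam Lam) →
      (∀ x ∈ Icc ℓ r, |b x| ≤ Lam) →
      (∀ x ∈ Icc ℓ r, an x ∈ Icc lam Lam) →
      (∀ x ∈ Icc ℓ r, ρn x ∈ Icc lam Lam) →
      (∀ x ∈ Icc ℓ r, |bn x| ≤ Lam) →
      ∀ ε : ℝ,
      (∀ x ∈ Icc ℓ r, |an x - a x| + |ρn x - ρ x| + |bn x - b x| ≤ ε) →
      ∀ x ∈ Icc ℓ r,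
        |uSol ℓ r uℓ ur a ρ b x - uSol ℓ r uℓ ur an ρn bn x| ≤
          C * |ur - uℓ| * ε := by
  have hT : 0 < r - ℓ := sub_pos.2 hlr
  set T := r - ℓ
  set H := 2 * (Lam / lam ^ 2) * T
  set D := (Real.exp H * (2 * ((1 + (Lam / lam) ^ 2) / lam ^ 2) * T) / lam
    + Real.exp H / lam ^ 2) * T
  set s₀ := Real.exp (-H) / Lam * T
  set M := Real.exp H / lam * T
  have hs₀ : 0 < s₀ := by positivity
  refine ⟨D / s₀ + M * D / s₀ ^ 2, by positivity, ?_⟩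
  intro uℓ ur a ρ b an ρn bn ha hρ hb han hρn hbn haB hρB hbB hanB hρnB hbnB ε hε x hx
  have hc : IsBoundedCharacteristic lam Lam ℓ r a ρ b := ⟨ha, hρ, hb, haB, hρB, hbB⟩
  have hcn : IsBoundedCharacteristic lam Lam ℓ r an ρn bn := ⟨han, hρn, hbn, hanB, hρnB, hbnB⟩
  have hSsub (z : ℝ) (hz : z ∈ Icc ℓ r) : |SFun ℓ a ρ b z - SFun ℓ an ρn bn z| ≤ D * ε :=
    (hc.abs_SFun_sub_le hcn hlam hε hz).trans_eq (by ring)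
  have hratio : |SFun ℓ a ρ b x / SFun ℓ a ρ b r - SFun ℓ an ρn bn x / SFun ℓ an ρn bn r| ≤
      D * ε / s₀ + M * (D * ε) / s₀ ^ 2 := by
    grw [abs_div_sub_div_le hs₀ (hc.le_SFun_right hlam hlr.le) (hcn.le_SFun_right hlam hlr.le)
      (hcn.abs_SFun_le hlam hx), hSsub x hx, hSsub r (right_mem_Icc.2 hlr.le)]
  calc |uSol ℓ r uℓ ur a ρ b x - uSol ℓ r uℓ ur an ρn bn x|
      = |ur - uℓ| * |SFun ℓ a ρ b x / SFun ℓ a ρ b r - SFun ℓ an ρn bn x / SFun ℓ an ρn bn r| := by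
        rw [← abs_mul]; congr 1; unfold uSol; ring
    _ ≤ |ur - uℓ| * (D * ε / s₀ + M * (D * ε) / s₀ ^ 2) := by gcongr
    _ = (D / s₀ + M * D / s₀ ^ 2) * |ur - uℓ| * ε := by ring
end

section
/- Energy estimate for the time derivative of a classical solution with Neumann boundary conditions: let ℓ < r, T > 0, λ, Λ > 0, let â, ρ̂ : [ℓ, r] → ℝ be continuously differentiable with λ ≤ â(x) ≤ Λ and λ ≤ ρ̂(x) ≤ Λ, and let u : [0,T] × [ℓ,r] → ℝ be twice continuously differentiable, satisfying ρ̂(x)·∂ₜu(t,x) = (1/2)·∂ₓ(â(x)·∂ₓu(t,x)) on [0,T]×[ℓ,r], the Neumann conditions ∂ₓu(t,ℓ) = ∂ₓu(t,r) = 0 for all t ∈ [0,T], and u(0,·) = φ. Then ∫₀^T ∫_ℓ^r ρ̂(x)·(∂ₜu(t,x))² dx dt + (1/4)·∫_ℓ^r â(x)·(∂ₓu(T,x))² dx = (1/4)·∫_ℓ^r â(x)·φ'(x)² dx; in particular ∫₀^T ∫_ℓ^r (∂ₜu(t,x))² dx dt ≤ (Λ/(4λ))·∫_ℓ^r φ'(x)²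 dx. -/
open Set MeasureTheory

/-!
Test the equation against `∂ₜu`: by the equation, `∫ ρ̂ (∂ₜu)² = ½ ∫ (â ∂ₓu)ₓ ∂ₜu`, and an
integration by parts in `x`, whose boundary term vanishes by the Neumann condition, turns this
into `-½ ∫ â ∂ₓu ∂ₓ∂ₜu = -¼ ∂ₜ ∫ â (∂ₓu)²`. Integrating over `[0, T]` gives the energy identity,
and the inequality follows from the bounds `λ ≤ ρ̂` and `â ≤ Λ`.
-/

section Rectangle

variable {a b c d : ℝ} {f g : ℝ → ℝ → ℝ}

lemma integrableOn_uncurry_of_continuousOn (hf : ContinuousOn f.uncurry (Icc a b ×ˢ Icc c d)) :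
    IntegrableOn f.uncurry (Ioc a b ×ˢ Ioc c d) :=
  (hf.integrableOn_compact (isCompact_Icc.prod isCompact_Icc)).mono_set
    (prod_mono Ioc_subset_Icc_self Ioc_subset_Icc_self)

lemma intervalIntegral_swap_of_continuousOn (hab : a ≤ b) (hcd : c ≤ d)
    (hf : ContinuousOn f.uncurry (Icc a b ×ˢ Icc c d)) :
    ∫ t in a..b, ∫ x in c..d, f t x = ∫ x in c..d, ∫ t in a..b, f t x := by
  apply intervalIntegral_intervalIntegral_swap
  rw [uIoc_of_le hab, uIoc_of_le hcd]
  exact integrableOn_uncurry_of_continuousOn hf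

lemma intervalIntegrable_intervalIntegral_of_continuousOn (hab : a ≤ b) (hcd : c ≤ d)
    (hf : ContinuousOn f.uncurry (Icc a b ×ˢ Icc c d)) :
    IntervalIntegrable (fun t => ∫ x in c..d, f t x) volume a b := by
  have h := integrableOn_uncurry_of_continuousOn hf
  rw [IntegrableOn, Measure.volume_eq_prod, ← Measure.prod_restrict] at h
  rw [intervalIntegrable_iff_integrableOn_Ioc_of_le hab]
  simp only [intervalIntegral.integral_of_le hcd]
  exact h.integral_prod_left

lemma intervalIntegral_intervalIntegral_mono (hab : a ≤ b) (hcd : c ≤ d)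
    (hf : ContinuousOn f.uncurry (Icc a b ×ˢ Icc c d))
    (hg : ContinuousOn g.uncurry (Icc a b ×ˢ Icc c d))
    (hfg : ∀ t ∈ Icc a b, ∀ x ∈ Icc c d, f t x ≤ g t x) :
    ∫ t in a..b, ∫ x in c..d, f t x ≤ ∫ t in a..b, ∫ x in c..d, g t x :=
  intervalIntegral.integral_mono_on hab
    (intervalIntegrable_intervalIntegral_of_continuousOn hab hcd hf)
    (intervalIntegrable_intervalIntegral_of_continuousOn hab hcd hg) fun t ht =>
      intervalIntegral.integral_mono_on hcd
        ((hf.uncurry_left t ht).intervalIntegrable_of_Icc hcd)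
        ((hg.uncurry_left t ht).intervalIntegrable_of_Icc hcd) (hfg t ht)

end Rectangle

section Interval

variable {a b : ℝ} {v v' : ℝ → ℝ}

lemma integral_mul_deriv_self (hab : a ≤ b)
    (hv : ∀ t ∈ Icc a b, HasDerivWithinAt v (v' t) (Icc a b) t)
    (hv' : IntervalIntegrable v' volume a b) :
    ∫ t in a..b, v t * v' t = (v b ^ 2 - v a ^ 2) / 2 := by
  rw [← uIcc_of_le hab] at hv
  have hparts :=
    intervalIntegral.integral_mul_deriv_eq_deriv_mul_of_hasDerivWithinAt hv hv hv' hv'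
  simp only [mul_comm (v' _) (v _)] at hparts
  linear_combination hparts / 2

/-- One time slice of the energy identity: `F` is the flux `â ∂ₓu`, `v = ∂ₜu` and `v' = ∂ₓ∂ₜu`. -/
lemma integral_mul_sq_eq_neg_half_integral_flux_mul_deriv {ρ F F' : ℝ → ℝ} (hab : a ≤ b)
    (hF : ∀ x ∈ Icc a b, HasDerivWithinAt F (F' x) (Icc a b) x)
    (hv : ∀ x ∈ Icc a b, HasDerivWithinAt v (v' x) (Icc a b) x)
    (hF' : IntervalIntegrable F' volume a b) (hv' : IntervalIntegrable v' volume a b)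
    (heq : ∀ x ∈ Icc a b, ρ x * v x = 1 / 2 * F' x) (ha : F a = 0) (hb : F b = 0) :
    ∫ x in a..b, ρ x * v x ^ 2 = -(1 / 2) * ∫ x in a..b, F x * v' x := by
  rw [← uIcc_of_le hab] at hF hv heq
  have hparts :=
    intervalIntegral.integral_mul_deriv_eq_deriv_mul_of_hasDerivWithinAt hF hv hF' hv'
  rw [ha, hb, zero_mul, zero_mul, sub_zero, zero_sub] at hparts
  calc ∫ x in a..b, ρ x * v x ^ 2 = ∫ x in a..b, 1 / 2 * (F' x * v x) :=
        intervalIntegral.integral_congr fun x hx => by linear_combination v x * heq x hx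
    _ = -(1 / 2) * ∫ x in a..b, F x * v' x := by
        rw [intervalIntegral.integral_const_mul, hparts]; ring

end Interval

theorem neumann_energy_identity {ℓ r T : ℝ} (hlr : ℓ ≤ r) (hT : 0 ≤ T)
    {ahat ρhat : ℝ → ℝ} {ut ux wx uxt : ℝ → ℝ → ℝ}
    (hacont : ContinuousOn ahat (Icc ℓ r))
    (hwx : ∀ t ∈ Icc (0:ℝ) T, ∀ x ∈ Icc ℓ r,
      HasDerivWithinAt (fun y => ahat y * ux t y) (wx t x) (Icc ℓ r) x)
    (huxt : ∀ t ∈ Icc (0:ℝ) T, ∀ x ∈ Icc ℓ r,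
      HasDerivWithinAt (fun s => ux s x) (uxt t x) (Icc 0 T) t)
    (hmixed : ∀ t ∈ Icc (0:ℝ) T, ∀ x ∈ Icc ℓ r,
      HasDerivWithinAt (fun y => ut t y) (uxt t x) (Icc ℓ r) x)
    (huxcont : ContinuousOn ux.uncurry (Icc 0 T ×ˢ Icc ℓ r))
    (hwxcont : ContinuousOn wx.uncurry (Icc 0 T ×ˢ Icc ℓ r))
    (huxtcont : ContinuousOn uxt.uncurry (Icc 0 T ×ˢ Icc ℓ r))
    (hpde : ∀ t ∈ Icc (0:ℝ) T, ∀ x ∈ Icc ℓ r, ρhat x * ut t x = 1 / 2 * wx t x)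
    (hneum : ∀ t ∈ Icc (0:ℝ) T, ux t ℓ = 0 ∧ ux t r = 0) :
    (∫ t in (0:ℝ)..T, ∫ x in ℓ..r, ρhat x * ut t x ^ 2) +
        1 / 4 * (∫ x in ℓ..r, ahat x * ux T x ^ 2) =
      1 / 4 * (∫ x in ℓ..r, ahat x * ux 0 x ^ 2) := by
  have hslice (t) (ht : t ∈ Icc 0 T) : ∫ x in ℓ..r, ρhat x * ut t x ^ 2 =
      -(1 / 2) * ∫ x in ℓ..r, ahat x * ux t x * uxt t x :=
    integral_mul_sq_eq_neg_half_integral_flux_mul_deriv hlr (hwx t ht) (hmixed t ht)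
      ((hwxcont.uncurry_left t ht).intervalIntegrable_of_Icc hlr)
      ((huxtcont.uncurry_left t ht).intervalIntegrable_of_Icc hlr) (hpde t ht)
      (by rw [(hneum t ht).1, mul_zero]) (by rw [(hneum t ht).2, mul_zero])
  have htime (x) (hx : x ∈ Icc ℓ r) : ∫ t in (0:ℝ)..T, ahat x * ux t x * uxt t x =
      ahat x * ((ux T x ^ 2 - ux 0 x ^ 2) / 2) := by
    simp_rw [mul_assoc]
    rw [intervalIntegral.integral_const_mul,
      integral_mul_deriv_self hT (fun t ht => huxt t ht x hx)
        ((huxtcont.uncurry_right x hx).intervalIntegrable_of_Icc hT)]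
  have hflux : ContinuousOn (fun t x => ahat x * ux t x * uxt t x).uncurry
      (Icc 0 T ×ˢ Icc ℓ r) :=
    ((hacont.comp continuousOn_snd fun _ hp => hp.2).mul huxcont).mul huxtcont
  have hsq (s) (hs : s ∈ Icc 0 T) :
      IntervalIntegrable (fun x => ahat x * ux s x ^ 2) volume ℓ r :=
    (hacont.mul ((huxcont.uncurry_left s hs).pow 2)).intervalIntegrable_of_Icc hlr
  have hdouble : ∫ t in (0:ℝ)..T, ∫ x in ℓ..r, ρhat x * ut t x ^ 2 =
      ∫ x in ℓ..r, (1 / 4 * (ahat x * ux 0 x ^ 2) - 1 / 4 * (ahat x * ux T x ^ 2)) :=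
    calc ∫ t in (0:ℝ)..T, ∫ x in ℓ..r, ρhat x * ut t x ^ 2
        = ∫ t in (0:ℝ)..T, -(1 / 2) * ∫ x in ℓ..r, ahat x * ux t x * uxt t x :=
          intervalIntegral.integral_congr fun t ht => hslice t (uIcc_of_le hT ▸ ht)
      _ = -(1 / 2) * ∫ x in ℓ..r, ∫ t in (0:ℝ)..T, ahat x * ux t x * uxt t x := by
          rw [intervalIntegral.integral_const_mul,
            intervalIntegral_swap_of_continuousOn hT hlr hflux]
      _ = _ := by
          rw [← intervalIntegral.integral_const_mul]
          exact intervalIntegral.integral_congr fun x hx => by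
            rw [htime x (uIcc_of_le hlr ▸ hx)]; ring
  rw [hdouble, intervalIntegral.integral_sub ((hsq 0 ⟨le_rfl, hT⟩).const_mul _)
    ((hsq T ⟨hT, le_rfl⟩).const_mul _), intervalIntegral.integral_const_mul,
    intervalIntegral.integral_const_mul]
  ring

theorem parabolic_time_derivative_energy_estimate_general
    (ℓ r T lam Lam : ℝ) (hlr : ℓ < r) (hT : 0 < T)
    (hlam : 0 < lam)
    (ahat ρhat : ℝ → ℝ)
    (haC1 : ContDiffOn ℝ 1 ahat (Icc ℓ r))
    (hρC1 : ContDiffOn ℝ 1 ρhat (Icc ℓ r))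
    (habd : ∀ x ∈ Icc ℓ r, ahat x ∈ Icc lam Lam)
    (hρbd : ∀ x ∈ Icc ℓ r, ρhat x ∈ Icc lam Lam)
    (u ut ux wx uxt : ℝ → ℝ → ℝ)
    -- first-order partial derivatives of u on [0,T] × [ℓ,r]
    (hux : ∀ t ∈ Icc (0:ℝ) T, ∀ x ∈ Icc ℓ r,
      HasDerivWithinAt (fun y => u t y) (ux t x) (Icc ℓ r) x)
    -- spatial derivative of the flux â ∂ₓu
    (hwx : ∀ t ∈ Icc (0:ℝ) T, ∀ x ∈ Icc ℓ r,
      HasDerivWithinAt (fun y => ahat y * ux t y) (wx t x) (Icc ℓ r) x)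
    -- second (mixed) partial derivatives, with equality of mixed partials
    (huxt : ∀ t ∈ Icc (0:ℝ) T, ∀ x ∈ Icc ℓ r,
      HasDerivWithinAt (fun s => ux s x) (uxt t x) (Icc 0 T) t)
    (hmixed : ∀ t ∈ Icc (0:ℝ) T, ∀ x ∈ Icc ℓ r,
      HasDerivWithinAt (fun y => ut t y) (uxt t x) (Icc ℓ r) x)
    -- continuity of the derivatives (u is of class C²)
    (hutcont : ContinuousOn (fun p : ℝ × ℝ => ut p.1 p.2) (Icc 0 T ×ˢ Icc ℓ r))
    (huxcont : ContinuousOn (fun p : ℝ × ℝ => ux p.1 p.2) (Icc 0 T ×ˢ Icc ℓ r))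
    (hwxcont : ContinuousOn (fun p : ℝ × ℝ => wx p.1 p.2) (Icc 0 T ×ˢ Icc ℓ r))
    (huxtcont : ContinuousOn (fun p : ℝ × ℝ => uxt p.1 p.2) (Icc 0 T ×ˢ Icc ℓ r))
    -- the parabolic equation ρ̂ ∂ₜu = (1/2) ∂ₓ(â ∂ₓu)
    (hpde : ∀ t ∈ Icc (0:ℝ) T, ∀ x ∈ Icc ℓ r, ρhat x * ut t x = 1 / 2 * wx t x)
    -- homogeneous Neumann boundary conditions
    (hneum : ∀ t ∈ Icc (0:ℝ) T, ux t ℓ = 0 ∧ ux t r = 0)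
    -- initial condition u(0,·) = φ with φ of class C¹
    (φ φ' : ℝ → ℝ)
    (hφ0 : ∀ x ∈ Icc ℓ r, u 0 x = φ x)
    (hφ' : ∀ x ∈ Icc ℓ r, HasDerivWithinAt φ (φ' x) (Icc ℓ r) x) :
    (∫ t in (0:ℝ)..T, ∫ x in ℓ..r, ρhat x * ut t x ^ 2) +
        1 / 4 * (∫ x in ℓ..r, ahat x * ux T x ^ 2) =
      1 / 4 * (∫ x in ℓ..r, ahat x * φ' x ^ 2) ∧
    (∫ t in (0:ℝ)..T, ∫ x in ℓ..r, ut t x ^ 2) ≤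
      Lam / (4 * lam) * ∫ x in ℓ..r, φ' x ^ 2 := by
  have h0 : (0:ℝ) ∈ Icc 0 T := ⟨le_rfl, hT.le⟩
  have hφ'_eq : EqOn φ' (ux 0) (uIcc ℓ r) := fun x hx => by
    rw [uIcc_of_le hlr.le] at hx
    exact (uniqueDiffOn_Icc hlr x hx).eq_deriv _ (hφ' x hx)
      ((hux 0 h0 x hx).congr (fun y hy => (hφ0 y hy).symm) (hφ0 x hx).symm)
  have hφ'a : ∫ x in ℓ..r, ahat x * φ' x ^ 2 = ∫ x in ℓ..r, ahat x * ux 0 x ^ 2 :=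
    intervalIntegral.integral_congr fun x hx => by rw [hφ'_eq hx]
  have hφ'1 : ∫ x in ℓ..r, φ' x ^ 2 = ∫ x in ℓ..r, ux 0 x ^ 2 :=
    intervalIntegral.integral_congr fun x hx => by rw [hφ'_eq hx]
  rw [hφ'a, hφ'1]
  have henergy := neumann_energy_identity hlr.le hT.le haC1.continuousOn hwx huxt hmixed
    huxcont hwxcont huxtcont hpde hneum
  refine ⟨henergy, ?_⟩
  have hρut : lam * ∫ t in (0:ℝ)..T, ∫ x in ℓ..r, ut t x ^ 2 ≤
      ∫ t in (0:ℝ)..T, ∫ x in ℓ..r, ρhat x * ut t x ^ 2 := by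
    simp_rw [← intervalIntegral.integral_const_mul]
    exact intervalIntegral_intervalIntegral_mono hT.le hlr.le
      (continuousOn_const.mul (hutcont.pow 2))
      ((hρC1.continuousOn.comp continuousOn_snd fun _ hp => hp.2).mul (hutcont.pow 2))
      fun t _ x hx => mul_le_mul_of_nonneg_right (hρbd x hx).1 (sq_nonneg _)
  have huxT : 0 ≤ ∫ x in ℓ..r, ahat x * ux T x ^ 2 :=
    intervalIntegral.integral_nonneg hlr.le fun x hx =>
      mul_nonneg (hlam.le.trans (habd x hx).1) (sq_nonneg _)
  have hux0 : ∫ x in ℓ..r, ahat x * ux 0 x ^ 2 ≤ Lam * ∫ x in ℓ..r, ux 0 x ^ 2 := by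
    have hcont := (huxcont.uncurry_left 0 h0).pow 2
    rw [← intervalIntegral.integral_const_mul]
    exact intervalIntegral.integral_mono_on hlr.le
      ((haC1.continuousOn.mul hcont).intervalIntegrable_of_Icc hlr.le)
      ((continuousOn_const.mul hcont).intervalIntegrable_of_Icc hlr.le)
      fun x hx => mul_le_mul_of_nonneg_right (habd x hx).2 (sq_nonneg _)
  rw [div_mul_eq_mul_div, le_div_iff₀ (by positivity)]
  linarith

/-- Energy estimate for the time derivative of a classical solution of
`ρ̂ ∂ₜu = (1/2) ∂ₓ(â ∂ₓu)` with homogeneous Neumann boundary conditions: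
`∫₀^T ∫_ℓ^r ρ̂ (∂ₜu)² + (1/4) ∫_ℓ^r â (∂ₓu(T,·))² = (1/4) ∫_ℓ^r â (φ')²`,
and in particular `∫₀^T ∫_ℓ^r (∂ₜu)² ≤ (Λ/(4λ)) ∫_ℓ^r (φ')²`. -/
theorem parabolic_time_derivative_energy_estimate
    (ℓ r T lam Lam : ℝ) (hlr : ℓ < r) (hT : 0 < T)
    (hlam : 0 < lam) (hLam : 0 < Lam)
    (ahat ρhat : ℝ → ℝ)
    (haC1 : ContDiffOn ℝ 1 ahat (Icc ℓ r))
    (hρC1 : ContDiffOn ℝ 1 ρhat (Icc ℓ r))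
    (habd : ∀ x ∈ Icc ℓ r, ahat x ∈ Icc lam Lam)
    (hρbd : ∀ x ∈ Icc ℓ r, ρhat x ∈ Icc lam Lam)
    (u ut ux wx uxt : ℝ → ℝ → ℝ)
    -- first-order partial derivatives of u on [0,T] × [ℓ,r]
    (hut : ∀ t ∈ Icc (0:ℝ) T, ∀ x ∈ Icc ℓ r,
      HasDerivWithinAt (fun s => u s x) (ut t x) (Icc 0 T) t)
    (hux : ∀ t ∈ Icc (0:ℝ) T, ∀ x ∈ Icc ℓ r,
      HasDerivWithinAt (fun y => u t y) (ux t x) (Icc ℓ r) x)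
    -- spatial derivative of the flux â ∂ₓu
    (hwx : ∀ t ∈ Icc (0:ℝ) T, ∀ x ∈ Icc ℓ r,
      HasDerivWithinAt (fun y => ahat y * ux t y) (wx t x) (Icc ℓ r) x)
    -- second (mixed) partial derivatives, with equality of mixed partials
    (huxt : ∀ t ∈ Icc (0:ℝ) T, ∀ x ∈ Icc ℓ r,
      HasDerivWithinAt (fun s => ux s x) (uxt t x) (Icc 0 T) t)
    (hmixed : ∀ t ∈ Icc (0:ℝ) T, ∀ x ∈ Icc ℓ r,
      HasDerivWithinAt (fun y => ut t y) (uxt t x) (Icc ℓ r) x)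
    -- continuity of the derivatives (u is of class C²)
    (hucont : ContinuousOn (fun p : ℝ × ℝ => u p.1 p.2) (Icc 0 T ×ˢ Icc ℓ r))
    (hutcont : ContinuousOn (fun p : ℝ × ℝ => ut p.1 p.2) (Icc 0 T ×ˢ Icc ℓ r))
    (huxcont : ContinuousOn (fun p : ℝ × ℝ => ux p.1 p.2) (Icc 0 T ×ˢ Icc ℓ r))
    (hwxcont : ContinuousOn (fun p : ℝ × ℝ => wx p.1 p.2) (Icc 0 T ×ˢ Icc ℓ r))
    (huxtcont : ContinuousOn (fun p : ℝ × ℝ => uxt p.1 p.2) (Icc 0 T ×ˢ Icc ℓ r))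
    -- the parabolic equation ρ̂ ∂ₜu = (1/2) ∂ₓ(â ∂ₓu)
    (hpde : ∀ t ∈ Icc (0:ℝ) T, ∀ x ∈ Icc ℓ r, ρhat x * ut t x = 1 / 2 * wx t x)
    -- homogeneous Neumann boundary conditions
    (hneum : ∀ t ∈ Icc (0:ℝ) T, ux t ℓ = 0 ∧ ux t r = 0)
    -- initial condition u(0,·) = φ with φ of class C¹
    (φ φ' : ℝ → ℝ)
    (hφ0 : ∀ x ∈ Icc ℓ r, u 0 x = φ x)
    (hφ' : ∀ x ∈ Icc ℓ r, HasDerivWithinAt φ (φ' x) (Icc ℓ r) x)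
    (hφ'cont : ContinuousOn φ' (Icc ℓ r)) :
    (∫ t in (0:ℝ)..T, ∫ x in ℓ..r, ρhat x * ut t x ^ 2) +
        1 / 4 * (∫ x in ℓ..r, ahat x * ux T x ^ 2) =
      1 / 4 * (∫ x in ℓ..r, ahat x * φ' x ^ 2) ∧
    (∫ t in (0:ℝ)..T, ∫ x in ℓ..r, ut t x ^ 2) ≤
      Lam / (4 * lam) * ∫ x in ℓ..r, φ' x ^ 2 :=
  parabolic_time_derivative_energy_estimate_general ℓ r T lam Lam hlr hT hlam ahat ρhat haC1 hρC1
    habd hρbd u ut ux wx uxt hux hwx huxt hmixed hutcont huxcont hwxcont huxtcont hpde hneum φ φ'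
    hφ0 hφ'
end
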